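/- Let (A, E) be a Frobenius category with P its full subcategory of projective objects, and let F ⊆ P be a full additive subcategory satisfying conditions (1) and (2): every object A fits into a sequence A →(i_A) F_A →(p_A) P_A with i_A a left F-approximation, P_A ∈ P and p_A a pseudo-cokernel of i_A, and dually a sequence P^A →(i^A) F^A →(p^A) A with p^A a right F-approximation, P^A ∈ P and i^A a pseudo-kernel of p^A. Then for every conflation X →i Y →d Z of (A, E), the morphism π(i) is a kernel of π(d) in A/[F] and π(d) is a cokernel of π(i) in A/[F]; in particular every member of E_F is a kernel-cokernel pair in A/[F]. -/

import Mathlib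

universe v u

open CategoryTheory Limits

namespace Paper

variable {A : Type u} [Category.{v} A]

section Defs
variable [Preadditive A]

/-- `i` is a kernel of `d`. -/
def IsKer {X Y Z : A} (i : X ⟶ Y) (d : Y ⟶ Z) : Prop :=
  i ≫ d = 0 ∧ ∀ ⦃W : A⦄ (g : W ⟶ Y), g ≫ d = 0 → ∃! g' : W ⟶ X, g' ≫ i = g

/-- `d` is a cokernel of `i`. -/
def IsCoker {X Y Z : A} (i : X ⟶ Y) (d : Y ⟶ Z) : Prop :=
  i ≫ d = 0 ∧ ∀ ⦃W : A⦄ (g : Y ⟶ W), i ≫ g = 0 → ∃! g' : Z ⟶ W, d ≫ g' = g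

/-- An exact structure in the sense of Quillen (following Keller's axioms) on an
additive category `A`: a class of kernel-cokernel pairs (conflations), closed under
isomorphism, satisfying the axioms (Ex0), (Ex1), (Ex1op), (Ex2), (Ex2op). -/
structure ExactStructure (A : Type u) [Category.{v} A] [Preadditive A] where
  /-- the class of conflations `X ⟶ Y ⟶ Z` -/
  IsConflation : ∀ ⦃X Y Z : A⦄, (X ⟶ Y) → (Y ⟶ Z) → Prop
  ker_of_conflation : ∀ ⦃X Y Z : A⦄ {i : X ⟶ Y} {d : Y ⟶ Z}, IsConflation i d → IsKer i d
  coker_of_conflation : ∀ ⦃X Y Z : A⦄ {i : X ⟶ Y} {d : Y ⟶ Z}, IsConflation i d → IsCoker i d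
  iso_closed : ∀ ⦃X Y Z X' Y' Z' : A⦄ {i : X ⟶ Y} {d : Y ⟶ Z} {i' : X' ⟶ Y'} {d' : Y' ⟶ Z'}
    (eX : X ≅ X') (eY : Y ≅ Y') (eZ : Z ≅ Z'),
    i ≫ eY.hom = eX.hom ≫ i' → d ≫ eZ.hom = eY.hom ≫ d' →
    IsConflation i d → IsConflation i' d'
  ex0 : ∀ ⦃Z : A⦄, IsZero Z → ∃ (X : A) (i : X ⟶ Z), IsConflation i (𝟙 Z)
  ex1 : ∀ ⦃Y Z W : A⦄ {d : Y ⟶ Z} {e : Z ⟶ W},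
    (∃ (X : A) (i : X ⟶ Y), IsConflation i d) → (∃ (X : A) (i : X ⟶ Z), IsConflation i e) →
    ∃ (X : A) (i : X ⟶ Y), IsConflation i (d ≫ e)
  ex1op : ∀ ⦃X Y W : A⦄ {i : X ⟶ Y} {j : Y ⟶ W},
    (∃ (Z : A) (d : Y ⟶ Z), IsConflation i d) → (∃ (Z : A) (d : W ⟶ Z), IsConflation j d) →
    ∃ (Z : A) (d : W ⟶ Z), IsConflation (i ≫ j) d
  ex2 : ∀ ⦃Y Z Z' : A⦄ (d : Y ⟶ Z) (f : Z' ⟶ Z),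
    (∃ (X : A) (i : X ⟶ Y), IsConflation i d) →
    ∃ (Y' : A) (d' : Y' ⟶ Z') (f' : Y' ⟶ Y),
      IsPullback d' f' f d ∧ ∃ (X : A) (i : X ⟶ Y'), IsConflation i d'
  ex2op : ∀ ⦃X Y X' : A⦄ (i : X ⟶ Y) (f : X ⟶ X'),
    (∃ (Z : A) (d : Y ⟶ Z), IsConflation i d) →
    ∃ (Y' : A) (i' : X' ⟶ Y') (f' : Y ⟶ Y'),
      IsPushout i f f' i' ∧ ∃ (Z : A) (d : Y' ⟶ Z), IsConflation i' d

namespace ExactStructure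

variable (E : ExactStructure A)

/-- `d` is a deflation. -/
def IsDeflation {Y Z : A} (d : Y ⟶ Z) : Prop :=
  ∃ (X : A) (i : X ⟶ Y), E.IsConflation i d

/-- `i` is an inflation. -/
def IsInflation {X Y : A} (i : X ⟶ Y) : Prop :=
  ∃ (Z : A) (d : Y ⟶ Z), E.IsConflation i d

/-- projective object: every deflation onto it splits. -/
def Proj (P : A) : Prop :=
  ∀ ⦃Y : A⦄ (d : Y ⟶ P), E.IsDeflation d → ∃ s : P ⟶ Y, s ≫ d = 𝟙 P

/-- injective object: every inflation out of it splits. -/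
def Inj (I : A) : Prop :=
  ∀ ⦃Y : A⦄ (i : I ⟶ Y), E.IsInflation i → ∃ r : Y ⟶ I, i ≫ r = 𝟙 I

/-- enough projective objects -/
def EnoughProj : Prop :=
  ∀ X : A, ∃ (P : A) (d : P ⟶ X), E.Proj P ∧ E.IsDeflation d

/-- enough injective objects -/
def EnoughInj : Prop :=
  ∀ X : A, ∃ (I : A) (i : X ⟶ I), E.Inj I ∧ E.IsInflation i

/-- A Frobenius category: enough projectives, enough injectives, and the two classes coincide. -/
structure IsFrobenius : Prop where
  enoughProj : E.EnoughProj
  enoughInj : E.EnoughInj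
  proj_iff_inj : ∀ P : A, E.Proj P ↔ E.Inj P

end ExactStructure

end Defs

end Paper
namespace Paper

variable {A : Type u} [Category.{v} A] [Preadditive A]

/-- `f` factors through an object of `F`. -/
def FactorsThru (F : Set A) {X Y : A} (f : X ⟶ Y) : Prop :=
  ∃ Z ∈ F, ∃ (g : X ⟶ Z) (h : Z ⟶ Y), g ≫ h = f

/-- The ideal `[F](X, Y)` of morphisms factoring through objects of `F`
(as an additive subgroup, taking the subgroup generated by such morphisms;
for an additive subcategory `F` this is exactly the set of such morphisms). -/
def fIdeal (F : Set A) (X Y : A) : AddSubgroup (X ⟶ Y) :=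
  AddSubgroup.closure {f | FactorsThru F f}

lemma fIdeal_comp_right (F : Set A) {X Y W : A} {f : X ⟶ Y} (hf : f ∈ fIdeal F X Y)
    (v : Y ⟶ W) : f ≫ v ∈ fIdeal F X W := by
  have : f ≫ v = ((Preadditive.rightComp X v : (X ⟶ Y) →+ (X ⟶ W)) f) := rfl
  rw [this]
  have hmap : (fIdeal F X Y).map (Preadditive.rightComp X v) ≤ fIdeal F X W := by
    rw [fIdeal, AddMonoidHom.map_closure]
    apply (AddSubgroup.closure_le _).2
    rintro x ⟨y, ⟨Z, hZ, g, h, rfl⟩, rfl⟩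
    exact AddSubgroup.subset_closure ⟨Z, hZ, g, h ≫ v,
      show g ≫ h ≫ v = (g ≫ h) ≫ v from (Category.assoc g h v).symm⟩
  exact hmap (AddSubgroup.mem_map_of_mem _ hf)

lemma fIdeal_comp_left (F : Set A) {X Y W : A} (u : W ⟶ X) {f : X ⟶ Y}
    (hf : f ∈ fIdeal F X Y) : u ≫ f ∈ fIdeal F W Y := by
  have : u ≫ f = ((Preadditive.leftComp Y u : (X ⟶ Y) →+ (W ⟶ Y)) f) := rfl
  rw [this]
  have hmap : (fIdeal F X Y).map (Preadditive.leftComp Y u) ≤ fIdeal F W Y := by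
    rw [fIdeal, AddMonoidHom.map_closure]
    apply (AddSubgroup.closure_le _).2
    rintro x ⟨y, ⟨Z, hZ, g, h, rfl⟩, rfl⟩
    exact AddSubgroup.subset_closure ⟨Z, hZ, u ≫ g, h,
      show (u ≫ g) ≫ h = u ≫ g ≫ h from Category.assoc u g h⟩
  exact hmap (AddSubgroup.mem_map_of_mem _ hf)

/-- Objects of the factor category `A/[F]`. -/
structure FObj (A : Type u) (F : Set A) : Type u where
  obj : A

/-- The factor category `A/[F]`: same objects as `A`, morphisms are
residue classes modulo the ideal `[F]`. -/
instance factorCategory (F : Set A) : Category.{v} (FObj A F) where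
  Hom X Y := (X.obj ⟶ Y.obj) ⧸ fIdeal F X.obj Y.obj
  id X := QuotientAddGroup.mk (𝟙 X.obj)
  comp {X Y Z} f g :=
    Quotient.liftOn₂ f g (fun f g => QuotientAddGroup.mk (f ≫ g))
      (by
        intro a₁ a₂ b₁ b₂ h₁ h₂
        have h₁' : -a₁ + b₁ ∈ fIdeal F X.obj Y.obj := QuotientAddGroup.eq.mp (Quotient.sound h₁)
        have h₂' : -a₂ + b₂ ∈ fIdeal F Y.obj Z.obj := QuotientAddGroup.eq.mp (Quotient.sound h₂)
        show QuotientAddGroup.mk (a₁ ≫ a₂) = QuotientAddGroup.mk (b₁ ≫ b₂)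
        refine QuotientAddGroup.eq.mpr ?_
        have heq : -(a₁ ≫ a₂) + b₁ ≫ b₂ = (-a₁ + b₁) ≫ a₂ + b₁ ≫ (-a₂ + b₂) := by
          simp only [Preadditive.add_comp, Preadditive.comp_add, Preadditive.neg_comp,
            Preadditive.comp_neg]
          abel
        rw [heq]
        exact add_mem (fIdeal_comp_right F h₁' a₂) (fIdeal_comp_left F b₁ h₂'))
  id_comp {X Y} f := by
    induction f using Quotient.inductionOn with
    | h f => exact congrArg QuotientAddGroup.mk (Category.id_comp f)
  comp_id {X Y} f := by
    induction f using Quotient.inductionOn with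
    | h f => exact congrArg QuotientAddGroup.mk (Category.comp_id f)
  assoc {W X Y Z} f g h := by
    induction f using Quotient.inductionOn with
    | h f =>
      induction g using Quotient.inductionOn with
      | h g =>
        induction h using Quotient.inductionOn with
        | h h => exact congrArg QuotientAddGroup.mk (Category.assoc f g h)

instance factorPreadditive (F : Set A) : Preadditive (FObj A F) where
  homGroup X Y := inferInstanceAs (AddCommGroup ((X.obj ⟶ Y.obj) ⧸ fIdeal F X.obj Y.obj))
  add_comp P Q R f f' g := by
    induction f using Quotient.inductionOn with
    | h f =>
      induction f' using Quotient.inductionOn with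
      | h f' =>
        induction g using Quotient.inductionOn with
        | h g =>
          show QuotientAddGroup.mk ((f + f') ≫ g) =
            QuotientAddGroup.mk (f ≫ g) + QuotientAddGroup.mk (f' ≫ g)
          rw [← QuotientAddGroup.mk_add]
          exact congrArg QuotientAddGroup.mk (Preadditive.add_comp _ _ _ f f' g)
  comp_add P Q R f g g' := by
    induction f using Quotient.inductionOn with
    | h f =>
      induction g using Quotient.inductionOn with
      | h g =>
        induction g' using Quotient.inductionOn with
        | h g' =>
          show QuotientAddGroup.mk (f ≫ (g + g')) =
            QuotientAddGroup.mk (f ≫ g) + QuotientAddGroup.mk (f ≫ g')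
          rw [← QuotientAddGroup.mk_add]
          exact congrArg QuotientAddGroup.mk (Preadditive.comp_add _ _ _ f g g')

/-- The canonical projection functor `π : A ⟶ A/[F]`. -/
def fproj (F : Set A) : A ⥤ FObj A F where
  obj X := ⟨X⟩
  map f := QuotientAddGroup.mk f
  map_id _ := rfl
  map_comp _ _ := rfl

/-- The class `E_F` of composable pairs in `A/[F]` isomorphic to the image of a
conflation of `(A, E)` under the projection functor. -/
def MemEF (E : ExactStructure A) (F : Set A) ⦃X Y Z : FObj A F⦄
    (i : X ⟶ Y) (d : Y ⟶ Z) : Prop :=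
  ∃ (X' Y' Z' : A) (i' : X' ⟶ Y') (d' : Y' ⟶ Z'), E.IsConflation i' d' ∧
    ∃ (eX : (fproj F).obj X' ≅ X) (eY : (fproj F).obj Y' ≅ Y) (eZ : (fproj F).obj Z' ≅ Z),
      (fproj F).map i' ≫ eY.hom = eX.hom ≫ i ∧ (fproj F).map d' ≫ eZ.hom = eY.hom ≫ d

section Hyp
variable [HasZeroObject A] [HasBinaryBiproducts A]

/-- The hypotheses of Theorem 3.1: `F` is a full additive subcategory of the
projective objects satisfying the approximation conditions (1) and (2). -/
structure FactorHyp (E : ExactStructure A) (F : Set A) : Prop where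
  /-- every object of `F` is projective -/
  proj : ∀ P ∈ F, E.Proj P
  /-- `F` is additive: it contains a zero object -/
  zero_mem : ∃ Z ∈ F, IsZero Z
  /-- `F` is additive: it is closed under direct sums -/
  sum_mem : ∀ X Y : A, X ∈ F → Y ∈ F → ∃ W ∈ F, Nonempty (W ≅ X ⊞ Y)
  /-- condition (1): `A ⟶ F_A ⟶ P_A` with `i_A` a left `F`-approximation and
  `p_A` a pseudo-cokernel of `i_A`, `P_A` projective -/
  cond1 : ∀ X : A, ∃ (FA PA : A) (iA : X ⟶ FA) (pA : FA ⟶ PA), FA ∈ F ∧ E.Proj PA ∧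
    (∀ F₁ ∈ F, ∀ g : X ⟶ F₁, ∃ t : FA ⟶ F₁, iA ≫ t = g) ∧
    iA ≫ pA = 0 ∧ (∀ ⦃W : A⦄ (c : FA ⟶ W), iA ≫ c = 0 → ∃ t : PA ⟶ W, pA ≫ t = c)
  /-- condition (2): `P^A ⟶ F^A ⟶ A` with `p^A` a right `F`-approximation and
  `i^A` a pseudo-kernel of `p^A`, `P^A` projective -/
  cond2 : ∀ X : A, ∃ (PA FA : A) (iA : PA ⟶ FA) (pA : FA ⟶ X), FA ∈ F ∧ E.Proj PA ∧
    (∀ F₁ ∈ F, ∀ g : F₁ ⟶ X, ∃ t : F₁ ⟶ FA, t ≫ pA = g) ∧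
    iA ≫ pA = 0 ∧ (∀ ⦃W : A⦄ (c : W ⟶ FA), c ≫ pA = 0 → ∃ t : W ⟶ PA, t ≫ iA = c)

end Hyp

end Paper
namespace Paper

/-! The ideal `[F]` is the set of morphisms factoring through `F`, since `F` is additive.
Objects of `F` are projective and, the category being Frobenius, injective; so a morphism into
`Y` whose composite with `d` factors through `F` differs from a morphism through `i` by one
factoring through `F`, which gives the factorisations in `A/[F]`, and dually for cokernels.
Their uniqueness amounts to `π(i)` being mono and `π(d)` epi. If `h ≫ i` factors through `F`,
it factors through the left approximation `i_W`, say as `i_W ≫ c`; since `c ≫ d` is killed by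
`i_W`, it factors through the pseudo-cokernel `p_W`, and projectivity of `P_W` lets one correct
`c` by a multiple of `p_W` until it factors through the kernel `i`; hence `h` factors through
`F_W`. Condition (2) and injectivity of `P^W` give the dual statement. -/

section KernelCokernel

variable {C : Type*} [Category C] [Preadditive C] {X Y Z : C} {i : X ⟶ Y} {d : Y ⟶ Z}

lemma IsKer.mono (h : IsKer i d) : Mono i :=
  Preadditive.mono_of_cancel_zero _ fun g hg => by
    obtain ⟨_, -, huniq⟩ := h.2 0 zero_comp
    exact (huniq g hg).trans (huniq 0 zero_comp).symm

lemma IsCoker.epi (h : IsCoker i d) : Epi d :=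
  Preadditive.epi_of_cancel_zero _ fun g hg => by
    obtain ⟨_, -, huniq⟩ := h.2 0 comp_zero
    exact (huniq g hg).trans (huniq 0 comp_zero).symm

lemma IsKer.of_mono [Mono i] (w : i ≫ d = 0)
    (lift : ∀ ⦃W : C⦄ (g : W ⟶ Y), g ≫ d = 0 → ∃ g' : W ⟶ X, g' ≫ i = g) : IsKer i d :=
  ⟨w, fun _ g hg => (lift g hg).elim fun g' hg' =>
    ⟨g', hg', fun _ hy => (cancel_mono i).1 (hy.trans hg'.symm)⟩⟩

lemma IsCoker.of_epi [Epi d] (w : i ≫ d = 0)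
    (desc : ∀ ⦃W : C⦄ (g : Y ⟶ W), i ≫ g = 0 → ∃ g' : Z ⟶ W, d ≫ g' = g) : IsCoker i d :=
  ⟨w, fun _ g hg => (desc g hg).elim fun g' hg' =>
    ⟨g', hg', fun _ hy => (cancel_epi d).1 (hy.trans hg'.symm)⟩⟩

variable {X' Y' Z' : C} {i' : X' ⟶ Y'} {d' : Y' ⟶ Z'}

lemma IsKer.of_iso (eX : X' ≅ X) (eY : Y' ≅ Y) (eZ : Z' ≅ Z)
    (hi : i' ≫ eY.hom = eX.hom ≫ i) (hd : d' ≫ eZ.hom = eY.hom ≫ d)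
    (h : IsKer i' d') : IsKer i d := by
  obtain rfl : i = eX.inv ≫ i' ≫ eY.hom := by rw [hi, Iso.inv_hom_id_assoc]
  obtain rfl : d = eY.inv ≫ d' ≫ eZ.hom := by rw [hd, Iso.inv_hom_id_assoc]
  have := h.mono
  refine IsKer.of_mono (by simp [reassoc_of% h.1]) fun W g hg => ?_
  obtain ⟨g', hg', -⟩ := h.2 (g ≫ eY.inv) ((cancel_mono eZ.hom).1 (by simpa using hg))
  exact ⟨g' ≫ eX.hom, by simp [reassoc_of% hg']⟩

lemma IsCoker.of_iso (eX : X' ≅ X) (eY : Y' ≅ Y) (eZ : Z' ≅ Z)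
    (hi : i' ≫ eY.hom = eX.hom ≫ i) (hd : d' ≫ eZ.hom = eY.hom ≫ d)
    (h : IsCoker i' d') : IsCoker i d := by
  obtain rfl : i = eX.inv ≫ i' ≫ eY.hom := by rw [hi, Iso.inv_hom_id_assoc]
  obtain rfl : d = eY.inv ≫ d' ≫ eZ.hom := by rw [hd, Iso.inv_hom_id_assoc]
  have := h.epi
  refine IsCoker.of_epi (by simp [reassoc_of% h.1]) fun W g hg => ?_
  obtain ⟨g', hg', -⟩ := h.2 (eY.hom ≫ g) ((cancel_epi eX.inv).1 (by simpa using hg))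
  exact ⟨eZ.inv ≫ g', by simp [hg']⟩

end KernelCokernel

section FactorCategory

variable {A : Type u} [Category.{v} A] [Preadditive A] {F : Set A}

instance fproj_additive : (fproj F).Additive where
  map_add := rfl

lemma fproj_map_eq_iff {X Y : A} {f g : X ⟶ Y} :
    (fproj F).map f = (fproj F).map g ↔ f - g ∈ fIdeal F X Y :=
  QuotientAddGroup.eq_iff_sub_mem

lemma fproj_map_eq_zero_iff {X Y : A} {f : X ⟶ Y} :
    (fproj F).map f = 0 ↔ f ∈ fIdeal F X Y :=
  QuotientAddGroup.eq_zero_iff f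

lemma fproj_map_surjective {X Y : FObj A F} (f : X ⟶ Y) :
    ∃ g : X.obj ⟶ Y.obj, (fproj F).map g = f :=
  QuotientAddGroup.mk_surjective f

lemma mem_fIdeal_iff_factorsThru [HasBinaryBiproducts A] (hzero : ∃ Z ∈ F, IsZero Z)
    (hsum : ∀ X Y : A, X ∈ F → Y ∈ F → ∃ W ∈ F, Nonempty (W ≅ X ⊞ Y))
    {X Y : A} {f : X ⟶ Y} : f ∈ fIdeal F X Y ↔ FactorsThru F f := by
  refine ⟨fun hf => ?_, fun hf => AddSubgroup.subset_closure hf⟩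
  let S : AddSubgroup (X ⟶ Y) :=
    { carrier := {f | FactorsThru F f}
      zero_mem' := by
        obtain ⟨Z, hZ, -⟩ := hzero
        exact ⟨Z, hZ, 0, 0, zero_comp⟩
      add_mem' := by
        rintro - - ⟨Z₁, h₁, g₁, k₁, rfl⟩ ⟨Z₂, h₂, g₂, k₂, rfl⟩
        obtain ⟨W, hW, ⟨e⟩⟩ := hsum Z₁ Z₂ h₁ h₂
        exact ⟨W, hW, biprod.lift g₁ g₂ ≫ e.inv, e.hom ≫ biprod.desc k₁ k₂, by simp⟩
      neg_mem' := by
        rintro - ⟨Z, hZ, g, k, rfl⟩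
        exact ⟨Z, hZ, -g, k, Preadditive.neg_comp g k⟩ }
  exact (AddSubgroup.closure_le S).2 le_rfl hf

end FactorCategory

namespace ExactStructure

variable {A : Type u} [Category.{v} A] [Preadditive A] {E : ExactStructure A}

lemma Proj.exists_lift {P Y Z : A} (hP : E.Proj P) {d : Y ⟶ Z} (hd : E.IsDeflation d)
    (m : P ⟶ Z) : ∃ s : P ⟶ Y, s ≫ d = m := by
  obtain ⟨Y', d', f', hpb, hd'⟩ := E.ex2 d m hd
  obtain ⟨s, hs⟩ := hP d' hd'
  exact ⟨s ≫ f', by rw [Category.assoc, ← hpb.w, reassoc_of% hs]⟩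

lemma Inj.exists_extend {I X Y : A} (hI : E.Inj I) {i : X ⟶ Y} (hi : E.IsInflation i)
    (m : X ⟶ I) : ∃ n : Y ⟶ I, i ≫ n = m := by
  obtain ⟨Y', i', f', hpo, hi'⟩ := E.ex2op i m hi
  obtain ⟨r, hr⟩ := hI i' hi'
  exact ⟨f' ≫ r, by rw [← Category.assoc, hpo.w, Category.assoc, hr, Category.comp_id]⟩

end ExactStructure

section Conflation

variable {A : Type u} [Category.{v} A] [Preadditive A] {E : ExactStructure A} {F : Set A}
  {X Y Z W : A} {i : X ⟶ Y} {d : Y ⟶ Z}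

lemma exists_lift_sub_factorsThru (hproj : ∀ P ∈ F, E.Proj P) (hc : E.IsConflation i d)
    {g : W ⟶ Y} (hg : FactorsThru F (g ≫ d)) : ∃ g₁ : W ⟶ X, FactorsThru F (g - g₁ ≫ i) := by
  obtain ⟨F₀, hF₀, a, b, hab⟩ := hg
  obtain ⟨s, hs⟩ := (hproj F₀ hF₀).exists_lift ⟨X, i, hc⟩ b
  obtain ⟨g₁, hg₁, -⟩ := (E.ker_of_conflation hc).2 (g - a ≫ s)
    (by rw [Preadditive.sub_comp, Category.assoc, hs, hab, sub_self])
  exact ⟨g₁, F₀, hF₀, a, s, by rw [hg₁, sub_sub_cancel]⟩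

lemma exists_desc_sub_factorsThru (hinj : ∀ I ∈ F, E.Inj I) (hc : E.IsConflation i d)
    {g : Y ⟶ W} (hg : FactorsThru F (i ≫ g)) : ∃ g₁ : Z ⟶ W, FactorsThru F (g - d ≫ g₁) := by
  obtain ⟨F₀, hF₀, a, b, hab⟩ := hg
  obtain ⟨n, hn⟩ := (hinj F₀ hF₀).exists_extend ⟨Z, d, hc⟩ a
  obtain ⟨g₁, hg₁, -⟩ := (E.coker_of_conflation hc).2 (g - n ≫ b)
    (by rw [Preadditive.comp_sub, ← Category.assoc, hn, hab, sub_self])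
  exact ⟨g₁, F₀, hF₀, n, b, by rw [hg₁, sub_sub_cancel]⟩

variable [HasBinaryBiproducts A]

lemma FactorsThru.of_comp_inflation (hF : FactorHyp E F) (hc : E.IsConflation i d)
    {h : W ⟶ X} (hh : FactorsThru F (h ≫ i)) : FactorsThru F h := by
  have hker := E.ker_of_conflation hc
  obtain ⟨F₀, hF₀, a, b, hab⟩ := hh
  obtain ⟨FW, PW, iW, pW, hFW, hPW, happrox, hip, hpcoker⟩ := hF.cond1 W
  obtain ⟨t, rfl⟩ := happrox F₀ hF₀ a
  rw [Category.assoc] at hab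
  obtain ⟨m, hm⟩ := hpcoker ((t ≫ b) ≫ d)
    (by rw [Category.assoc, reassoc_of% hab, hker.1, comp_zero])
  obtain ⟨n, hn⟩ := hPW.exists_lift ⟨X, i, hc⟩ m
  obtain ⟨w, hw, -⟩ := hker.2 (t ≫ b - pW ≫ n)
    (by rw [Preadditive.sub_comp, Category.assoc pW, hn, hm, sub_self])
  have := hker.mono
  refine ⟨FW, hFW, iW, w, (cancel_mono i).1 ?_⟩
  rw [Category.assoc, hw, Preadditive.comp_sub, reassoc_of% hip, zero_comp, sub_zero, hab]

lemma FactorsThru.of_deflation_comp (hE : E.IsFrobenius) (hF : FactorHyp E F)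
    (hc : E.IsConflation i d) {h : Z ⟶ W} (hh : FactorsThru F (d ≫ h)) : FactorsThru F h := by
  have hcoker := E.coker_of_conflation hc
  obtain ⟨F₀, hF₀, a, b, hab⟩ := hh
  obtain ⟨PW, FW, iW, pW, hFW, hPW, happrox, hip, hpker⟩ := hF.cond2 W
  obtain ⟨t, rfl⟩ := happrox F₀ hF₀ b
  obtain ⟨m, hm⟩ := hpker (i ≫ a ≫ t)
    (by rw [Category.assoc, Category.assoc, hab, reassoc_of% hcoker.1, zero_comp])
  obtain ⟨n, hn⟩ := ((hE.proj_iff_inj PW).1 hPW).exists_extend ⟨Z, d, hc⟩ m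
  obtain ⟨w, hw, -⟩ := hcoker.2 (a ≫ t - n ≫ iW)
    (by rw [Preadditive.comp_sub, reassoc_of% hn, hm, sub_self])
  have := hcoker.epi
  refine ⟨FW, hFW, w, pW, (cancel_epi d).1 ?_⟩
  rw [reassoc_of% hw, Preadditive.sub_comp, Category.assoc n, hip, comp_zero, sub_zero,
    Category.assoc, hab]

end Conflation

section Main

variable {A : Type u} [Category.{v} A] [Preadditive A] [HasBinaryBiproducts A]
  {E : ExactStructure A} {F : Set A} {X Y Z : A} {i : X ⟶ Y} {d : Y ⟶ Z}

lemma FactorHyp.fproj_map_eq_iff (hF : FactorHyp E F) {f g : X ⟶ Y} :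
    (fproj F).map f = (fproj F).map g ↔ FactorsThru F (f - g) :=
  Paper.fproj_map_eq_iff.trans (mem_fIdeal_iff_factorsThru hF.zero_mem hF.sum_mem)

lemma FactorHyp.fproj_map_eq_zero_iff (hF : FactorHyp E F) {f : X ⟶ Y} :
    (fproj F).map f = 0 ↔ FactorsThru F f :=
  Paper.fproj_map_eq_zero_iff.trans (mem_fIdeal_iff_factorsThru hF.zero_mem hF.sum_mem)

lemma isKer_fproj_map (hF : FactorHyp E F) (hc : E.IsConflation i d) :
    IsKer ((fproj F).map i) ((fproj F).map d) := by
  have : Mono ((fproj F).map i) := Preadditive.mono_of_cancel_zero _ fun g hg => by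
    obtain ⟨h, rfl⟩ := fproj_map_surjective g
    exact hF.fproj_map_eq_zero_iff.2
      ((hF.fproj_map_eq_zero_iff (f := h ≫ i)).1 hg |>.of_comp_inflation hF hc)
  refine IsKer.of_mono (by rw [← Functor.map_comp, (E.ker_of_conflation hc).1,
    Functor.map_zero]) fun W g hg => ?_
  obtain ⟨g, rfl⟩ := fproj_map_surjective g
  obtain ⟨g₁, hg₁⟩ := exists_lift_sub_factorsThru hF.proj hc
    ((hF.fproj_map_eq_zero_iff (f := g ≫ d)).1 hg)
  exact ⟨(fproj F).map g₁, ((hF.fproj_map_eq_iff (f := g) (g := g₁ ≫ i)).2 hg₁).symm⟩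

lemma isCoker_fproj_map (hE : E.IsFrobenius) (hF : FactorHyp E F) (hc : E.IsConflation i d) :
    IsCoker ((fproj F).map i) ((fproj F).map d) := by
  have : Epi ((fproj F).map d) := Preadditive.epi_of_cancel_zero _ fun g hg => by
    obtain ⟨h, rfl⟩ := fproj_map_surjective g
    exact hF.fproj_map_eq_zero_iff.2
      ((hF.fproj_map_eq_zero_iff (f := d ≫ h)).1 hg |>.of_deflation_comp hE hF hc)
  refine IsCoker.of_epi (by rw [← Functor.map_comp, (E.ker_of_conflation hc).1,
    Functor.map_zero]) fun W g hg => ?_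
  obtain ⟨g, rfl⟩ := fproj_map_surjective g
  obtain ⟨g₁, hg₁⟩ := exists_desc_sub_factorsThru
    (fun I hI => (hE.proj_iff_inj I).1 (hF.proj I hI)) hc
    ((hF.fproj_map_eq_zero_iff (f := i ≫ g)).1 hg)
  exact ⟨(fproj F).map g₁, ((hF.fproj_map_eq_iff (f := g) (g := d ≫ g₁)).2 hg₁).symm⟩

end Main

theorem factor_category_kernel_cokernel_pairs_general
    {A : Type u} [Category.{v} A] [Preadditive A] [HasBinaryBiproducts A]
    (E : ExactStructure A) (hE : E.IsFrobenius) (F : Set A) (hF : FactorHyp E F) :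
    (∀ ⦃X Y Z : A⦄ (i : X ⟶ Y) (d : Y ⟶ Z), E.IsConflation i d →
      IsKer ((fproj F).map i) ((fproj F).map d) ∧
      IsCoker ((fproj F).map i) ((fproj F).map d)) ∧
    (∀ ⦃X Y Z : FObj A F⦄ (i : X ⟶ Y) (d : Y ⟶ Z), MemEF E F i d →
      IsKer i d ∧ IsCoker i d) := by
  refine ⟨fun _ _ _ _ _ hc => ⟨isKer_fproj_map hF hc, isCoker_fproj_map hE hF hc⟩, ?_⟩
  rintro X Y Z i d ⟨X', Y', Z', i', d', hc, eX, eY, eZ, hi, hd⟩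
  exact ⟨(isKer_fproj_map hF hc).of_iso eX eY eZ hi hd,
    (isCoker_fproj_map hE hF hc).of_iso eX eY eZ hi hd⟩

/-- **Theorem 2 (Step 1 in the proof of Theorem 3.1).** Under the hypotheses of
Theorem 3.1, for every conflation `X ⟶i Y ⟶d Z` of `(A, E)` the morphism `π(i)` is a
kernel of `π(d)` in `A/[F]` and `π(d)` is a cokernel of `π(i)` in `A/[F]`; consequently
every member of the class `E_F` is a kernel-cokernel pair in `A/[F]`. -/
theorem factor_category_kernel_cokernel_pairs
    {A : Type u} [Category.{v} A] [Preadditive A] [HasZeroObject A] [HasBinaryBiproducts A]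
    (E : ExactStructure A) (hE : E.IsFrobenius) (F : Set A) (hF : FactorHyp E F) :
    (∀ ⦃X Y Z : A⦄ (i : X ⟶ Y) (d : Y ⟶ Z), E.IsConflation i d →
      IsKer ((fproj F).map i) ((fproj F).map d) ∧
      IsCoker ((fproj F).map i) ((fproj F).map d)) ∧
    (∀ ⦃X Y Z : FObj A F⦄ (i : X ⟶ Y) (d : Y ⟶ Z), MemEF E F i d →
      IsKer i d ∧ IsCoker i d) :=
  factor_category_kernel_cokernel_pairs_general E hE F hF

end Paper
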